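/- arXiv:2310.17382 — 6 statements merged into one kernel-verified Lean document; each statement's English description precedes it below -/
import Mathlib

section
/- Let a_1,...,a_n be positive integers, M a common multiple of the a_i, d_i = M/a_i, and b a nonnegative integer. Then the number of nonnegative integer solutions of a_1 x_1 + ... + a_n x_n = b equals the sum over all tuples (t_1,...,t_n) with 0 ≤ t_i ≤ d_i − 1 of P*(f(t_1,...,t_n)), where f(t_1,...,t_n) = (b − a_1 t_1 − ... − a_n t_n)/M and P*(m) denotes the number of nonnegative integer solutions of x_1 + ... + x_n = m when m is a nonnegative integer divisible appropriately (and 0 when b − ∑ a_i t_i is negative or not divisible by M). -/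
/-!
Write each `x i` as `y i * d i + t i` with `0 ≤ t i < d i`. Since `a i * d i = M`, the equation
`∑ a i * x i = b` becomes `∑ a i * t i + M * ∑ y i = b`. For fixed remainders `t` this is
solvable only when `∑ a i * t i ≤ b` and `M ∣ b - ∑ a i * t i`, and then it says
`∑ y i = (b - ∑ a i * t i) / M`.
-/

open Finset

theorem Nat.add_mul_eq_iff {s M m b : ℕ} (hM : 0 < M) :
    s + M * m = b ↔ s ≤ b ∧ M ∣ b - s ∧ m = (b - s) / M := by
  constructor
  · rintro rfl
    simp [Nat.mul_div_cancel_left _ hM]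
  · rintro ⟨hle, hdvd, rfl⟩
    rw [Nat.mul_div_cancel' hdvd]
    omega

theorem Nat.card_subtype_add_mul_eq {α : Type*} (f : α → ℕ) {s M b : ℕ} (hM : 0 < M) :
    Nat.card {y // s + M * f y = b} =
      if s ≤ b ∧ M ∣ b - s then Nat.card {y // f y = (b - s) / M} else 0 := by
  split_ifs with h
  · exact Nat.card_congr <| Equiv.subtypeEquivRight fun y => by
      simp only [Nat.add_mul_eq_iff hM, h, true_and]
  · have : IsEmpty {y // s + M * f y = b} :=
      ⟨fun y => h <| by
        obtain ⟨hle, hdvd, -⟩ := (Nat.add_mul_eq_iff hM).mp y.2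
        exact ⟨hle, hdvd⟩⟩
    exact Nat.card_of_isEmpty

variable {ι : Type*}

def piDivModEquiv (d : ι → ℕ) [∀ i, NeZero (d i)] :
    (ι → ℕ) ≃ (ι → ℕ) × ((i : ι) → Fin (d i)) :=
  (Equiv.piCongrRight fun i => Nat.divModEquiv (d i)).trans (Equiv.arrowProdEquivProdArrow _ _ _)

variable [Fintype ι]

theorem finite_subtype_add_mul_sum_eq {s M b : ℕ} (hM : 0 < M) :
    Finite {y : ι → ℕ // s + M * ∑ i, y i = b} := by
  classical
  refine Set.Finite.to_subtype <| (Set.finite_Iic fun _ => b).subset fun y hy i => ?_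
  have hyi : y i ≤ ∑ j, y j := single_le_sum (fun j _ => Nat.zero_le (y j)) (mem_univ i)
  have hsum : ∑ j, y j ≤ M * ∑ j, y j := Nat.le_mul_of_pos_left _ hM
  have hy : s + M * ∑ j, y j = b := hy
  change y i ≤ b
  omega

theorem sum_mul_piDivModEquiv_symm {a d : ι → ℕ} [∀ i, NeZero (d i)] {M : ℕ}
    (had : ∀ i, a i * d i = M) (y : ι → ℕ) (t : (i : ι) → Fin (d i)) :
    ∑ i, a i * (piDivModEquiv d).symm (y, t) i = ∑ i, a i * (t i : ℕ) + M * ∑ i, y i := by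
  simp only [piDivModEquiv, Equiv.symm_trans_apply, Equiv.piCongrRight_symm_apply,
    Equiv.arrowProdEquivProdArrow, Equiv.coe_fn_symm_mk, Pi.map_apply, Nat.divModEquiv_symm_apply,
    mul_sum, ← sum_add_distrib]
  refine sum_congr rfl fun i _ => ?_
  rw [← had i]
  ring

theorem card_sum_mul_eq_card_sigma {a d : ι → ℕ} [∀ i, NeZero (d i)] {M : ℕ}
    (had : ∀ i, a i * d i = M) (b : ℕ) :
    Nat.card {x : ι → ℕ // ∑ i, a i * x i = b} =
      Nat.card (Σ t : (i : ι) → Fin (d i),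
        {y : ι → ℕ // ∑ i, a i * (t i : ℕ) + M * ∑ i, y i = b}) :=
  Nat.card_congr <|
    (((Equiv.prodComm _ _).trans (piDivModEquiv d).symm).subtypeEquiv fun p => by
        simp [sum_mul_piDivModEquiv_symm had]).symm.trans
      (Equiv.subtypeProdEquivSigmaSubtype
        fun (t : (i : ι) → Fin (d i)) (y : ι → ℕ) =>
          ∑ i, a i * (t i : ℕ) + M * ∑ i, y i = b)

theorem stmt1_general (n : ℕ) (a : Fin n → ℕ) (M : ℕ) (hM : 0 < M)
    (hdvd : ∀ i, a i ∣ M) (b : ℕ) :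
    Nat.card {x : Fin n → ℕ // ∑ i, a i * x i = b} =
      ∑ t : (i : Fin n) → Fin (M / a i),
        if (∑ i, a i * (t i : ℕ)) ≤ b ∧ M ∣ (b - ∑ i, a i * (t i : ℕ)) then
          Nat.card {x : Fin n → ℕ // ∑ i, x i = (b - ∑ i, a i * (t i : ℕ)) / M}
        else 0 := by
  have had : ∀ i, a i * (M / a i) = M := fun i => Nat.mul_div_cancel' (hdvd i)
  have : ∀ i, NeZero (M / a i) := fun i => ⟨fun h => hM.ne' (by rw [← had i, h, mul_zero])⟩
  have : ∀ t : (i : Fin n) → Fin (M / a i),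
      Finite {y : Fin n → ℕ // ∑ i, a i * (t i : ℕ) + M * ∑ i, y i = b} :=
    fun _ => finite_subtype_add_mul_sum_eq hM
  rw [card_sum_mul_eq_card_sigma had, Nat.card_sigma]
  exact sum_congr rfl fun t _ => Nat.card_subtype_add_mul_eq _ hM

theorem stmt1 (n : ℕ) (a : Fin n → ℕ) (ha : ∀ i, 0 < a i) (M : ℕ) (hM : 0 < M)
    (hdvd : ∀ i, a i ∣ M) (b : ℕ) :
    Nat.card {x : Fin n → ℕ // ∑ i, a i * x i = b} =
      ∑ t : (i : Fin n) → Fin (M / a i),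
        if (∑ i, a i * (t i : ℕ)) ≤ b ∧ M ∣ (b - ∑ i, a i * (t i : ℕ)) then
          Nat.card {x : Fin n → ℕ // ∑ i, x i = (b - ∑ i, a i * (t i : ℕ)) / M}
        else 0 :=
  stmt1_general n a M hM hdvd b
end

section
/- Let a_1,...,a_n be positive integers (n ≥ 2), M their least common multiple, d_i = M/a_i, and b ≥ 0 an integer. The number P(b) of nonnegative integer solutions of a_1 x_1 + ... + a_n x_n = b equals ∑_{t_1=0}^{d_1−1} ⋯ ∑_{t_n=0}^{d_n−1} C(f(t_1,...,t_n)+1; n−1), where f(t_1,...,t_n) = (b − ∑_{i=1}^n a_i t_i)/M, and C(k, l) = k(k+1)···(k+l−1)/l! when k is a positive integer and b − ∑ a_i t_i is a nonnegative multiple of M, and C(k,l) = 0 otherwise. -/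
/-!
Write each `x i = y i * d i + t i` with `t i < d i = M / a i`. Since `a i * d i = M`, the equation
becomes `∑ a i * t i + M * ∑ y i = b`: for fixed residues `t` it is solvable only when
`b - ∑ a i * t i` is a nonnegative multiple `k * M`, and then the `y` are the compositions of `k`
into `n` nonnegative parts, of which there are `(k + n - 1).choose (n - 1)` by stars and bars.
-/

open Finset

theorem natCard_fun_sum_eq_choose (ι : Type*) [Fintype ι] [Nonempty ι] (k : ℕ) :
    Nat.card {y : ι → ℕ // ∑ i, y i = k} =
      (k + Fintype.card ι - 1).choose (Fintype.card ι - 1) := by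
  classical
  rw [← Nat.card_congr (Sym.equivNatSumOfFintype ι k), Sym.natCard_sym_eq_choose,
    Nat.card_eq_fintype_card]
  obtain ⟨m, hm⟩ := Nat.exists_eq_succ_of_ne_zero (Fintype.card_pos (α := ι)).ne'
  rw [hm, show m + 1 + k - 1 = m + k by omega, show k + (m + 1) - 1 = m + k by omega,
    Nat.succ_sub_one, Nat.choose_symm_add]

section AffineFiber

variable {ι : Type*} [Fintype ι] {M s b : ℕ}

theorem add_mul_eq_iff_of_dvd (hM : 0 < M) (hc : s ≤ b ∧ M ∣ b - s) (m : ℕ) :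
    s + M * m = b ↔ m = (b - s) / M := by
  obtain ⟨q, hq⟩ := hc.2
  rw [hq, Nat.mul_div_cancel_left _ hM]
  constructor
  · intro h
    exact Nat.eq_of_mul_eq_mul_left hM (by omega)
  · rintro rfl
    omega

theorem add_mul_ne_of_not_dvd (hc : ¬(s ≤ b ∧ M ∣ b - s)) (m : ℕ) : s + M * m ≠ b := by
  rintro rfl
  exact hc ⟨by omega, m, by omega⟩

def affineFiberEquiv (hM : 0 < M) (hc : s ≤ b ∧ M ∣ b - s) :
    {y : ι → ℕ // s + M * ∑ i, y i = b} ≃ {y : ι → ℕ // ∑ i, y i = (b - s) / M} :=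
  Equiv.subtypeEquivRight fun _ => add_mul_eq_iff_of_dvd hM hc _

theorem isEmpty_affineFiber (hc : ¬(s ≤ b ∧ M ∣ b - s)) :
    IsEmpty {y : ι → ℕ // s + M * ∑ i, y i = b} :=
  ⟨fun y => add_mul_ne_of_not_dvd hc _ y.2⟩

theorem finite_affineFiber (hM : 0 < M) : Finite {y : ι → ℕ // s + M * ∑ i, y i = b} := by
  classical
  by_cases hc : s ≤ b ∧ M ∣ b - s
  · exact .of_equiv _ ((Sym.equivNatSumOfFintype ι _).trans (affineFiberEquiv hM hc).symm)
  · have := isEmpty_affineFiber (ι := ι) hc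
    infer_instance

theorem card_affineFiber [Nonempty ι] (hM : 0 < M) :
    Nat.card {y : ι → ℕ // s + M * ∑ i, y i = b} =
      if s ≤ b ∧ M ∣ b - s then
        ((b - s) / M + Fintype.card ι - 1).choose (Fintype.card ι - 1)
      else 0 := by
  split_ifs with hc
  · rw [Nat.card_congr (affineFiberEquiv hM hc), natCard_fun_sum_eq_choose]
  · have := isEmpty_affineFiber (ι := ι) hc
    exact Nat.card_of_isEmpty

end AffineFiber

section DivMod

variable {ι : Type*}

def Equiv.piNatDivMod (d : ι → ℕ) [∀ i, NeZero (d i)] :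
    (ι → ℕ) ≃ (∀ i, Fin (d i)) × (ι → ℕ) :=
  (Equiv.piCongrRight fun i => (Nat.divModEquiv (d i)).trans (Equiv.prodComm _ _)).trans
    (Equiv.arrowProdEquivProdArrow _ _ _)

theorem Equiv.piNatDivMod_symm_apply (d : ι → ℕ) [∀ i, NeZero (d i)]
    (p : (∀ i, Fin (d i)) × (ι → ℕ)) (i : ι) :
    (Equiv.piNatDivMod d).symm p i = p.2 i * d i + p.1 i :=
  rfl

theorem sum_mul_piNatDivMod_symm [Fintype ι] {a d : ι → ℕ} [∀ i, NeZero (d i)] {M : ℕ}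
    (had : ∀ i, a i * d i = M) (p : (∀ i, Fin (d i)) × (ι → ℕ)) :
    ∑ i, a i * (Equiv.piNatDivMod d).symm p i = ∑ i, a i * (p.1 i : ℕ) + M * ∑ i, p.2 i := by
  rw [mul_sum, ← sum_add_distrib]
  refine sum_congr rfl fun i _ => ?_
  rw [Equiv.piNatDivMod_symm_apply, ← had i]
  ring

def weightedSolutionsEquivSigma [Fintype ι] {a d : ι → ℕ} [∀ i, NeZero (d i)] {M : ℕ}
    (had : ∀ i, a i * d i = M) (b : ℕ) :
    {x : ι → ℕ // ∑ i, a i * x i = b} ≃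
      Σ t : ∀ i, Fin (d i), {y : ι → ℕ // ∑ i, a i * (t i : ℕ) + M * ∑ i, y i = b} :=
  ((Equiv.piNatDivMod d).symm.subtypeEquiv
      (p := fun p => ∑ i, a i * (p.1 i : ℕ) + M * ∑ i, p.2 i = b)
      fun p => by rw [sum_mul_piNatDivMod_symm had]).symm.trans
    (Equiv.subtypeProdEquivSigmaSubtype fun (t : ∀ i, Fin (d i)) (y : ι → ℕ) =>
      ∑ i, a i * (t i : ℕ) + M * ∑ i, y i = b)

end DivMod

theorem card_weightedSolutions {ι : Type*} [Fintype ι] [DecidableEq ι] [Nonempty ι]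
    (a : ι → ℕ) {M : ℕ} (hM : 0 < M) (haM : ∀ i, a i ∣ M) (b : ℕ) :
    Nat.card {x : ι → ℕ // ∑ i, a i * x i = b} =
      ∑ t : (i : ι) → Fin (M / a i),
        if ∑ i, a i * (t i : ℕ) ≤ b ∧ M ∣ b - ∑ i, a i * (t i : ℕ) then
          ((b - ∑ i, a i * (t i : ℕ)) / M + Fintype.card ι - 1).choose (Fintype.card ι - 1)
        else 0 := by
  have (i : ι) : NeZero (M / a i) :=
    ⟨fun h => hM.ne' (by rw [← Nat.mul_div_cancel' (haM i), h, Nat.mul_zero])⟩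
  have (t : ∀ i, Fin (M / a i)) :=
    finite_affineFiber (ι := ι) (s := ∑ i, a i * (t i : ℕ)) (b := b) hM
  rw [Nat.card_congr (weightedSolutionsEquivSigma (fun i => Nat.mul_div_cancel' (haM i)) b),
    Nat.card_sigma]
  exact sum_congr rfl fun t _ => card_affineFiber hM

theorem stmt2 (n : ℕ) (hn : 2 ≤ n) (a : Fin n → ℕ) (ha : ∀ i, 0 < a i) (M : ℕ)
    (hM : M = Finset.univ.lcm a) (b : ℕ) :
    Nat.card {x : Fin n → ℕ // ∑ i, a i * x i = b} =
      ∑ t : (i : Fin n) → Fin (M / a i),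
        if (∑ i, a i * (t i : ℕ)) ≤ b ∧ M ∣ (b - ∑ i, a i * (t i : ℕ)) then
          Nat.choose ((b - ∑ i, a i * (t i : ℕ)) / M + n - 1) (n - 1)
        else 0 := by
  have : Nonempty (Fin n) := ⟨⟨0, by omega⟩⟩
  have hMpos : 0 < M := by
    rw [hM, Nat.pos_iff_ne_zero, Ne, Finset.lcm_eq_zero_iff]
    rintro ⟨i, -, hi⟩
    exact (ha i).ne' hi
  have haM (i : Fin n) : a i ∣ M := hM ▸ dvd_lcm (mem_univ i)
  simpa only [Fintype.card_fin] using card_weightedSolutions a hMpos haM b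
end

section
/- Let a_1,...,a_n be positive integers with least common multiple M, d_i = M/a_i, and b ≥ 0 an integer. The number Q(b) of nonnegative integer solutions of a_1 x_1 + ... + a_n x_n ≤ b equals ∑_{t_1=0}^{d_1−1} ⋯ ∑_{t_n=0}^{d_n−1} ∑_{t_{n+1}=0}^{M−1} C(f(t_1,...,t_{n+1})+1; n), where f(t_1,...,t_{n+1}) = (b − ∑_{i=1}^n a_i t_i − t_{n+1})/M, and C(k, l) = k(k+1)···(k+l−1)/l! if k is a positive integer and the numerator is a nonnegative multiple of M, and 0 otherwise. -/
/-!
Write `xᵢ = tᵢ + dᵢ wᵢ` with `0 ≤ tᵢ < dᵢ`, and treat the slack `b - ∑ aᵢ xᵢ` as one more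
unknown (the coordinate `none : Option (Fin n)`) with coefficient `1` and `d = M`. Since
`aᵢ dᵢ = M`, the inequality becomes `∑ aᵢ tᵢ + t_{n+1} + M (w₁ + ⋯ + w_{n+1}) = b`, so for fixed
residues `t` the admissible `w` are the `(n+1)`-tuples summing to `f(t)`, and stars and bars
counts them as `C(f(t) + n, n)`.
-/

open Finset

theorem Nat.card_fun_sum_eq (α : Type*) [Fintype α] (k : ℕ) :
    Nat.card {f : α → ℕ // ∑ i, f i = k} = (Fintype.card α + k - 1).choose k := by
  classical
  rw [← Nat.card_congr (Sym.equivNatSumOfFintype α k), Nat.card_eq_fintype_card,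
    Sym.card_sym_eq_choose]

theorem finite_setOf_add_mul_sum_eq (α : Type*) [Fintype α] {M : ℕ} (hM : 0 < M) (c b : ℕ) :
    {w : α → ℕ | c + M * ∑ i, w i = b}.Finite := by
  refine (Set.Finite.pi' fun _ => Set.finite_Iic b).subset fun w (hw : _ = b) i => ?_
  calc w i ≤ ∑ j, w j := single_le_sum (fun _ _ => Nat.zero_le _) (mem_univ i)
    _ ≤ M * ∑ j, w j := Nat.le_mul_of_pos_left _ hM
    _ ≤ b := by omega

theorem Nat.card_add_mul_sum_eq (α : Type*) [Fintype α] {M : ℕ} (hM : 0 < M) (c b : ℕ) :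
    Nat.card {w : α → ℕ // c + M * ∑ i, w i = b} =
      if c ≤ b ∧ M ∣ b - c then (Fintype.card α + (b - c) / M - 1).choose ((b - c) / M)
      else 0 := by
  split_ifs with h
  · obtain ⟨hcb, k, hk⟩ := h
    rw [hk, Nat.mul_div_cancel_left k hM, ← Nat.card_fun_sum_eq]
    refine Nat.card_congr (Equiv.subtypeEquivRight fun w => ⟨fun hw => ?_, fun hw => ?_⟩)
    · exact Nat.eq_of_mul_eq_mul_left hM (by omega)
    · rw [hw]
      omega
  · rw [Nat.card_eq_zero]
    exact .inl ⟨fun ⟨w, hw⟩ => h ⟨by omega, ∑ i, w i, by omega⟩⟩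

section

variable {ι : Type*}

def divModPiEquiv (d : ι → ℕ) [∀ i, NeZero (d i)] :
    (ι → ℕ) ≃ (Π i, Fin (d i)) × (ι → ℕ) :=
  (Equiv.piCongrRight fun i => (Nat.divModEquiv (d i)).trans (Equiv.prodComm _ _)).trans
    (Equiv.arrowProdEquivProdArrow _ _ _)

variable [Fintype ι]

theorem sum_mul_eq_sum_mul_mod_add_mul_sum_div {a d : ι → ℕ} {M : ℕ}
    (had : ∀ i, a i * d i = M) (x : ι → ℕ) :
    ∑ i, a i * x i = ∑ i, a i * (x i % d i) + M * ∑ i, x i / d i := by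
  rw [mul_sum, ← sum_add_distrib]
  refine sum_congr rfl fun i _ => ?_
  conv_lhs => rw [← Nat.mod_add_div (x i) (d i)]
  rw [Nat.mul_add, ← Nat.mul_assoc, had]

theorem Nat.card_sum_mul_eq_sum_card [DecidableEq ι] {a d : ι → ℕ} {M : ℕ} (hM : 0 < M)
    (had : ∀ i, a i * d i = M) (b : ℕ) :
    Nat.card {x : ι → ℕ // ∑ i, a i * x i = b} =
      ∑ t : Π i, Fin (d i), Nat.card {w : ι → ℕ // ∑ i, a i * t i + M * ∑ i, w i = b} := by
  have : ∀ i, NeZero (d i) := fun i => ⟨fun h => hM.ne' (by rw [← had i, h, mul_zero])⟩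
  have : ∀ t : Π i, Fin (d i), Finite {w : ι → ℕ // ∑ i, a i * t i + M * ∑ i, w i = b} :=
    fun t => (finite_setOf_add_mul_sum_eq ι hM _ b).to_subtype
  let e := (divModPiEquiv d).subtypeEquiv (p := fun x => ∑ i, a i * x i = b)
    (q := fun p => ∑ i, a i * p.1 i + M * ∑ i, p.2 i = b) fun x => by
      rw [sum_mul_eq_sum_mul_mod_add_mul_sum_div had x]
      rfl
  rw [Nat.card_congr (e.trans (Equiv.subtypeProdEquivSigmaSubtype
    fun (t : Π i, Fin (d i)) (w : ι → ℕ) => ∑ i, a i * t i + M * ∑ i, w i = b)), Nat.card_sigma]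

theorem sum_option_elim_one_mul (a : ι → ℕ) (y : Option ι → ℕ) :
    ∑ o, o.elim 1 a * y o = y none + ∑ i, a i * y (some i) := by
  rw [Fintype.sum_option, Option.elim, one_mul]
  rfl

theorem Nat.card_sum_mul_le_eq_card_option (a : ι → ℕ) (b : ℕ) :
    Nat.card {x : ι → ℕ // ∑ i, a i * x i ≤ b} =
      Nat.card {y : Option ι → ℕ // ∑ o, o.elim 1 a * y o = b} :=
  Nat.card_congr
    { toFun x := ⟨fun o => o.elim (b - ∑ i, a i * x.1 i) x.1, by
        rw [sum_option_elim_one_mul]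
        exact Nat.sub_add_cancel x.2⟩
      invFun y := ⟨fun i => y.1 (some i),
        (Nat.le_add_left _ _).trans (sum_option_elim_one_mul a y ▸ y.2).le⟩
      left_inv _ := rfl
      right_inv y := by
        ext (_ | i)
        · exact Nat.sub_eq_of_eq_add (sum_option_elim_one_mul a y ▸ y.2).symm
        · rfl }

end

theorem stmt7 (n : ℕ) (a : Fin n → ℕ) (ha : ∀ i, 0 < a i) (M : ℕ)
    (hM : M = Finset.univ.lcm a) (b : ℕ) :
    Nat.card {x : Fin n → ℕ // ∑ i, a i * x i ≤ b} =
      ∑ t : (i : Fin n) → Fin (M / a i), ∑ u : Fin M,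
        if (∑ i, a i * (t i : ℕ)) + (u : ℕ) ≤ b ∧
            M ∣ (b - ((∑ i, a i * (t i : ℕ)) + (u : ℕ))) then
          Nat.choose ((b - ((∑ i, a i * (t i : ℕ)) + (u : ℕ))) / M + n) n
        else 0 := by
  have hdvd : ∀ i, a i ∣ M := fun i => hM ▸ dvd_lcm (mem_univ i)
  have hM0 : 0 < M := Nat.pos_of_ne_zero fun h0 => by
    obtain ⟨i, -, hi⟩ := lcm_eq_zero_iff.mp (hM ▸ h0)
    exact (ha i).ne' hi
  let d : Option (Fin n) → ℕ := fun o => o.elim M fun i => M / a i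
  have had : ∀ o, o.elim 1 a * d o = M := by
    rintro (_ | i)
    exacts [one_mul M, Nat.mul_div_cancel' (hdvd i)]
  let e : Fin M × (Π i, Fin (M / a i)) ≃ Π o, Fin (d o) :=
    (Equiv.piOptionEquivProd (β := fun o => Fin (d o))).symm
  rw [Nat.card_sum_mul_le_eq_card_option, Nat.card_sum_mul_eq_sum_card hM0 had, ← e.sum_comp,
    Fintype.sum_prod_type, sum_comm]
  refine sum_congr rfl fun t _ => sum_congr rfl fun u _ => ?_
  have hres : ∑ o, o.elim 1 a * (e (u, t) o : ℕ) = ∑ i, a i * t i + u := by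
    rw [sum_option_elim_one_mul, add_comm]
    rfl
  rw [hres, Nat.card_add_mul_sum_eq _ hM0, Fintype.card_option, Fintype.card_fin]
  simp only [show ∀ k, n + 1 + k - 1 = k + n by omega, Nat.choose_symm_add]
end

section
/- Let a_1,...,a_n be positive integers with least common multiple M, b a nonnegative integer, r the remainder of b modulo M, and b' = ⌊b/M⌋. Define l_i = P'(r + (i−1)M) for i = 1,...,n, where P'(c) is the number of nonnegative integer solutions of ∑_{j=1}^n a_j t_j = c subject to 0 ≤ t_j ≤ M/a_j − 1 for all j. Then the number P(b) of nonnegative integer solutions of ∑_{i=1}^n a_i x_i = b equals ∑_{i=1}^n l_i · C(b' + 2 − i; n−1), where C(m; n−1) = (1/(n−1)!)·m(m+1)···(m+n−2) if m > 0 and 0 otherwise. -/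
/-- `C(m; j)` : equals `(1/j!)·m(m+1)···(m+j-1)` if `m > 0`, and `0` otherwise. -/
def Cm (m : ℤ) (j : ℕ) : ℕ := if 0 < m then Nat.choose (m.toNat + j - 1) j else 0

/-!
Write `x j = t j + (M / a j) * y j` with `t j < M / a j`. Then
`∑ a j * x j = ∑ a j * t j + M * ∑ y j`, and as every `a j * t j < M` the first part is
`< n * M`; so it is `b % M + i * M` for a unique `i < n`, and then `∑ y j = b / M - i`, which has
`C(b / M + 1 - i; n - 1)` solutions by stars and bars.
-/

open Finset

lemma card_sum_eq_choose (n s : ℕ) :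
    Nat.card {y : Fin n → ℕ // ∑ j, y j = s} = (n + s - 1).choose s := by
  rw [← Nat.card_congr (Sym.equivNatSumOfFintype (Fin n) s), Sym.natCard_sym_eq_choose,
    Nat.card_fin]

lemma card_add_sum_eq_Cm (n : ℕ) [NeZero n] (i s : ℕ) :
    Nat.card {y : Fin n → ℕ // i + ∑ j, y j = s} = Cm ((s : ℤ) + 1 - i) (n - 1) := by
  obtain ⟨k, rfl⟩ : ∃ k, n = k + 1 := ⟨n - 1, by have := NeZero.ne n; omega⟩
  by_cases hi : i ≤ s
  · have hshift : Nat.card {y : Fin (k + 1) → ℕ // i + ∑ j, y j = s} =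
        Nat.card {y : Fin (k + 1) → ℕ // ∑ j, y j = s - i} :=
      Nat.card_congr (Equiv.subtypeEquivRight fun y => by omega)
    rw [hshift, card_sum_eq_choose, Cm, if_pos (by omega)]
    convert Nat.choose_symm_add (a := s - i) (b := k) using 2 <;> omega
  · have : IsEmpty {y : Fin (k + 1) → ℕ // i + ∑ j, y j = s} := ⟨fun y => hi (by omega)⟩
    rw [Nat.card_of_isEmpty, Cm, if_neg (by omega)]

lemma add_mul_eq_and_div_eq_iff {S s b M i : ℕ} (hM : 0 < M) :
    S + M * s = b ∧ S / M = i ↔ S = b % M + i * M ∧ i + s = b / M := by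
  constructor
  · rintro ⟨rfl, rfl⟩
    rw [Nat.add_mul_mod_self_left, Nat.add_mul_div_left _ _ hM, Nat.mod_add_div']
    exact ⟨rfl, rfl⟩
  · rintro ⟨rfl, hs⟩
    refine ⟨?_, ?_⟩
    · rw [add_assoc, mul_comm, ← mul_add, hs, Nat.mod_add_div]
    · rw [Nat.add_mul_div_right _ _ hM, Nat.div_eq_of_lt (Nat.mod_lt _ hM), zero_add]

section

variable {n : ℕ} {a d : Fin n → ℕ} {M : ℕ}

def modDivEquiv (hd : ∀ j, 0 < d j) :
    (Fin n → ℕ) ≃ {t : Fin n → ℕ // ∀ j, t j < d j} × (Fin n → ℕ) where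
  toFun x := (⟨fun j => x j % d j, fun j => Nat.mod_lt _ (hd j)⟩, fun j => x j / d j)
  invFun p j := p.1.1 j + d j * p.2 j
  left_inv x := funext fun j => Nat.mod_add_div (x j) (d j)
  right_inv := by
    rintro ⟨⟨t, ht⟩, y⟩
    refine Prod.ext (Subtype.ext (funext fun j => ?_)) (funext fun j => ?_)
    · exact (Nat.add_mul_mod_self_left _ _ _).trans (Nat.mod_eq_of_lt (ht j))
    · change (t j + d j * y j) / d j = y j
      rw [Nat.add_mul_div_left _ _ (hd j), Nat.div_eq_of_lt (ht j), zero_add]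

lemma sum_mul_modDivEquiv_symm (hd : ∀ j, 0 < d j) (had : ∀ j, a j * d j = M)
    (p : {t : Fin n → ℕ // ∀ j, t j < d j} × (Fin n → ℕ)) :
    ∑ j, a j * (modDivEquiv hd).symm p j = ∑ j, a j * p.1.1 j + M * ∑ j, p.2 j := by
  simp only [modDivEquiv, Equiv.coe_fn_symm_mk, mul_add, ← mul_assoc, had, sum_add_distrib,
    mul_sum]

lemma finite_sum_mul_eq (ha : ∀ j, 0 < a j) (b : ℕ) :
    Finite {x : Fin n → ℕ // ∑ j, a j * x j = b} :=
  Set.Finite.to_subtype <| (Set.finite_Iic fun _ => b).subset fun x hx j =>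
    calc x j ≤ a j * x j := Nat.le_mul_of_pos_left _ (ha j)
      _ ≤ ∑ j, a j * x j := single_le_sum (fun j _ => Nat.zero_le (a j * x j)) (mem_univ j)
      _ = b := hx

lemma sum_mul_lt_mul [NeZero n] (ha : ∀ j, 0 < a j) (had : ∀ j, a j * d j = M)
    {t : Fin n → ℕ} (ht : ∀ j, t j < d j) : ∑ j, a j * t j < n * M :=
  calc ∑ j, a j * t j < ∑ j, a j * d j :=
        sum_lt_sum_of_nonempty univ_nonempty fun j _ => Nat.mul_lt_mul_of_pos_left (ht j) (ha j)
    _ = n * M := by simp [had]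

theorem card_sum_mul_eq_sum_card_mul_card [NeZero n] (ha : ∀ j, 0 < a j) (hd : ∀ j, 0 < d j)
    (had : ∀ j, a j * d j = M) (b : ℕ) :
    Nat.card {x : Fin n → ℕ // ∑ j, a j * x j = b} =
      ∑ i : Fin n,
        Nat.card {t : Fin n → ℕ // ∑ j, a j * t j = b % M + i * M ∧ ∀ j, t j < d j} *
          Nat.card {y : Fin n → ℕ // i + ∑ j, y j = b / M} := by
  have hM : 0 < M := had 0 ▸ Nat.mul_pos (ha 0) (hd 0)
  let P := {p : {t : Fin n → ℕ // ∀ j, t j < d j} × (Fin n → ℕ) //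
    ∑ j, a j * p.1.1 j + M * ∑ j, p.2 j = b}
  have eP : P ≃ {x : Fin n → ℕ // ∑ j, a j * x j = b} :=
    (modDivEquiv hd).symm.subtypeEquiv fun p => by rw [sum_mul_modDivEquiv_symm hd had]
  have : Finite P := eP.finite_iff.mpr (finite_sum_mul_eq ha b)
  let idx (p : P) : Fin n := ⟨(∑ j, a j * p.1.1.1 j) / M,
    (Nat.div_lt_iff_lt_mul hM).2 (sum_mul_lt_mul ha had p.1.1.2)⟩
  rw [← Nat.card_congr eP, ← Nat.card_congr (Equiv.sigmaFiberEquiv idx), Nat.card_sigma]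
  refine Fintype.sum_congr _ _ fun i => ?_
  rw [← Nat.card_prod]
  have split (q : {p : P // idx p = i}) :=
    (add_mul_eq_and_div_eq_iff hM).1 ⟨q.1.2, Fin.val_eq_of_eq q.2⟩
  exact Nat.card_congr
    { toFun q := (⟨q.1.1.1.1, (split q).1, q.1.1.1.2⟩, ⟨q.1.1.2, (split q).2⟩)
      invFun r :=
        have glue := (add_mul_eq_and_div_eq_iff hM).2 ⟨r.1.2.1, r.2.2⟩
        ⟨⟨(⟨r.1.1, r.1.2.2⟩, r.2.1), glue.1⟩, Fin.ext glue.2⟩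
      left_inv q := rfl
      right_inv r := rfl }

end

lemma sum_Icc_one_eq_sum_fin {β : Type*} [AddCommMonoid β] (n : ℕ) (f : ℕ → β) :
    ∑ i ∈ Icc 1 n, f i = ∑ i : Fin n, f (1 + i) := by
  rw [← Ico_add_one_right_eq_Icc, sum_Ico_eq_sum_range, Nat.add_sub_cancel,
    Fin.sum_univ_eq_sum_range (fun i => f (1 + i))]

theorem stmt8 (n : ℕ) (hn : 2 ≤ n) (a : Fin n → ℕ) (ha : ∀ i, 0 < a i) (M : ℕ)
    (hM : M = Finset.univ.lcm a) (b : ℕ) :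
    Nat.card {x : Fin n → ℕ // ∑ i, a i * x i = b} =
      ∑ i ∈ Finset.Icc 1 n,
        (Nat.card {t : Fin n → ℕ // (∑ j, a j * t j = b % M + (i - 1) * M) ∧
            ∀ j, t j ≤ M / a j - 1}) *
          Cm ((b / M : ℕ) + 2 - (i : ℤ)) (n - 1) := by
  have : NeZero n := ⟨by omega⟩
  have hdvd (j : Fin n) : a j ∣ M := hM ▸ dvd_lcm (mem_univ j)
  have hM0 : 0 < M := hM ▸ Nat.pos_of_ne_zero (lcm_ne_zero_iff.2 fun j _ => (ha j).ne')
  have hd (j : Fin n) : 0 < M / a j := Nat.div_pos (Nat.le_of_dvd hM0 (hdvd j)) (ha j)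
  rw [card_sum_mul_eq_sum_card_mul_card ha hd (fun j => Nat.mul_div_cancel' (hdvd j)),
    sum_Icc_one_eq_sum_fin]
  refine Fintype.sum_congr _ _ fun i => ?_
  simp only [Nat.le_sub_one_iff_lt (hd _), Nat.add_sub_cancel_left, card_add_sum_eq_Cm]
  congr 2
  push_cast
  ring
end

section
/- For n ≥ 2 and an odd nonnegative integer b with b' = ⌊b/2⌋, the number of nonnegative integer solutions of x_1 + x_2 + ... + x_{n−1} + 2 x_n = b equals ∑_{k=0}^{⌊(n−2)/2⌋} C(n−1, 2k+1) · C(b'−k+1; n−1), where C(m; n−1) = (1/(n−1)!)·m(m+1)···(m+n−2) if m > 0 and 0 otherwise. -/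
open Finset

lemma Cm_natCast_add_one (t j : ℕ) : Cm ((t : ℤ) + 1) j = (t + j).choose j := by
  rw [Cm, if_pos (by omega), show ((t : ℤ) + 1).toNat = t + 1 by omega, Nat.add_right_comm,
    Nat.add_sub_cancel]

lemma Cm_of_nonpos {m : ℤ} (hm : m ≤ 0) (j : ℕ) : Cm m j = 0 :=
  if_neg (by omega)

lemma Finset.sum_range_two_mul_add_one_of_even_eq_zero {M : Type*} [AddCommMonoid M]
    {f : ℕ → M} (hf : ∀ c, Even c → f c = 0) (K : ℕ) :
    ∑ c ∈ range (2 * K + 1), f c = ∑ k ∈ range K, f (2 * k + 1) := by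
  induction K with
  | zero => simpa using hf 0 ⟨0, rfl⟩
  | succ K ih =>
    rw [show 2 * (K + 1) + 1 = 2 * K + 1 + 1 + 1 by ring, sum_range_succ _ (2 * K + 1 + 1),
      sum_range_succ _ (2 * K + 1), ih, hf (2 * K + 1 + 1) ⟨K + 1, by ring⟩, add_zero,
      sum_range_succ]

section
variable (ι : Type*) [Fintype ι]

lemma Nat.card_sum_eq (t : ℕ) :
    Nat.card {f : ι → ℕ // ∑ i, f i = t} = (Fintype.card ι + t - 1).choose t := by
  classical
  rw [← Nat.card_congr (Sym.equivNatSumOfFintype ι t), Sym.natCard_sym_eq_choose,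
    Nat.card_eq_fintype_card]

def sumAddEquiv (t : ℕ) :
    {p : (ι → ℕ) × ℕ // ∑ i, p.1 i + p.2 = t} ≃ {f : Option ι → ℕ // ∑ i, f i = t} :=
  (Equiv.piOptionEquivProd.trans (Equiv.prodComm ℕ (ι → ℕ))).symm.subtypeEquiv fun p => by
    simp [Fintype.sum_option, add_comm]

instance (t : ℕ) : Finite {p : (ι → ℕ) × ℕ // ∑ i, p.1 i + p.2 = t} := by
  classical
  exact .of_equiv _ ((Sym.equivNatSumOfFintype (Option ι) t).trans (sumAddEquiv ι t).symm)

lemma Nat.card_sum_add_eq (t : ℕ) :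
    Nat.card {p : (ι → ℕ) × ℕ // ∑ i, p.1 i + p.2 = t} =
      (t + Fintype.card ι).choose (Fintype.card ι) := by
  rw [Nat.card_congr (sumAddEquiv ι t), Nat.card_sum_eq, Fintype.card_option,
    show Fintype.card ι + 1 + t - 1 = t + Fintype.card ι by omega]
  exact Nat.choose_symm_add

instance (c B : ℕ) : Finite {q : (ι → ℕ) × ℕ // 2 * (∑ i, q.1 i + q.2) + c = B} :=
  Finite.of_injective (β := {q : (ι → ℕ) × ℕ // ∑ i, q.1 i + q.2 = (B - c) / 2})
    (fun q => ⟨q.1, by have := q.2; omega⟩) fun _ _ h => Subtype.ext (Subtype.mk.inj h)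

lemma Nat.card_two_mul_sum_add_eq_zero_of_even {c B : ℕ} (hc : Even c) (hB : Odd B) :
    Nat.card {q : (ι → ℕ) × ℕ // 2 * (∑ i, q.1 i + q.2) + c = B} = 0 := by
  obtain ⟨a, rfl⟩ := hc
  obtain ⟨b, rfl⟩ := hB
  exact @Nat.card_of_isEmpty _ ⟨fun ⟨q, hq⟩ => by omega⟩

lemma Nat.card_two_mul_sum_add_odd (k b : ℕ) :
    Nat.card {q : (ι → ℕ) × ℕ // 2 * (∑ i, q.1 i + q.2) + (2 * k + 1) = 2 * b + 1} =
      Cm ((b : ℤ) - k + 1) (Fintype.card ι) := by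
  rcases le_or_gt k b with hkb | hbk
  · obtain ⟨t, rfl⟩ := Nat.exists_eq_add_of_le hkb
    rw [show ((k + t : ℕ) : ℤ) - k + 1 = (t : ℤ) + 1 by push_cast; ring, Cm_natCast_add_one,
      ← Nat.card_sum_add_eq]
    exact Nat.card_congr (Equiv.subtypeEquivRight fun q => by omega)
  · rw [Cm_of_nonpos (by omega)]
    exact @Nat.card_of_isEmpty _ ⟨fun ⟨q, hq⟩ => by omega⟩

lemma Finset.sum_eq_two_mul_sum_div_two_add_card_odd (x : ι → ℕ) :
    ∑ i, x i = 2 * ∑ i, x i / 2 + #{i | x i % 2 = 1} := by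
  rw [card_filter, mul_sum, ← sum_add_distrib]
  exact sum_congr rfl fun i _ => by split_ifs <;> omega

def oddSetHalfEquiv [DecidableEq ι] : (ι → ℕ) ≃ Finset ι × (ι → ℕ) where
  toFun x := (({i | x i % 2 = 1} : Finset ι), fun i => x i / 2)
  invFun p i := 2 * p.2 i + if i ∈ p.1 then 1 else 0
  left_inv x := by
    funext i
    simp only [mem_filter, mem_univ, true_and]
    split_ifs <;> omega
  right_inv p := by
    ext i
    · simp only [mem_filter, mem_univ, true_and]
      split_ifs <;> simp_all
    · simp only
      split_ifs <;> omega

def sumAddTwoMulEquiv [DecidableEq ι] (B : ℕ) :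
    {p : (ι → ℕ) × ℕ // ∑ i, p.1 i + 2 * p.2 = B} ≃
      Σ S : Finset ι, {q : (ι → ℕ) × ℕ // 2 * (∑ i, q.1 i + q.2) + #S = B} :=
  ((((oddSetHalfEquiv ι).prodCongr (Equiv.refl ℕ)).trans (Equiv.prodAssoc _ _ _)).subtypeEquiv
      fun p => by
        simp only [Equiv.trans_apply, Equiv.prodCongr_apply, Prod.map, Equiv.prodAssoc_apply,
          oddSetHalfEquiv, Equiv.coe_fn_mk, Equiv.refl_apply]
        rw [sum_eq_two_mul_sum_div_two_add_card_odd ι p.1]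
        omega).trans
    (Equiv.subtypeProdEquivSigmaSubtype
      fun (S : Finset ι) (q : (ι → ℕ) × ℕ) => 2 * (∑ i, q.1 i + q.2) + #S = B)

theorem Nat.card_sum_add_two_mul_eq_odd (b : ℕ) :
    Nat.card {p : (ι → ℕ) × ℕ // ∑ i, p.1 i + 2 * p.2 = 2 * b + 1} =
      ∑ k ∈ range ((Fintype.card ι - 1) / 2 + 1),
        (Fintype.card ι).choose (2 * k + 1) * Cm ((b : ℤ) - k + 1) (Fintype.card ι) := by
  classical
  set N := Fintype.card ι
  set g : ℕ → ℕ := fun c => Nat.card {q : (ι → ℕ) × ℕ // 2 * (∑ i, q.1 i + q.2) + c = 2 * b + 1}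
  have hg_even (c : ℕ) (hc : Even c) : N.choose c * g c = 0 := by
    simp only [g, Nat.card_two_mul_sum_add_eq_zero_of_even ι hc (odd_two_mul_add_one b), mul_zero]
  calc Nat.card _ = ∑ S : Finset ι, g #S := by
        rw [Nat.card_congr (sumAddTwoMulEquiv ι _), Nat.card_sigma]
    _ = ∑ c ∈ range (N + 1), N.choose c * g c := by
        rw [← powerset_univ, sum_powerset_apply_card, Finset.card_univ]; rfl
    _ = ∑ c ∈ range (2 * ((N - 1) / 2 + 1) + 1), N.choose c * g c := by
        refine sum_subset (range_subset_range.2 (by omega)) fun c _ hc => ?_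
        rw [Nat.choose_eq_zero_of_lt (by simpa using hc), zero_mul]
    _ = ∑ k ∈ range ((N - 1) / 2 + 1), N.choose (2 * k + 1) * g (2 * k + 1) :=
        sum_range_two_mul_add_one_of_even_eq_zero hg_even _
    _ = _ := by simp only [g, Nat.card_two_mul_sum_add_odd]; rfl

end

theorem stmt13_general (n : ℕ) (b : ℕ) (hb : Odd b) :
    Nat.card {p : (Fin (n - 1) → ℕ) × ℕ // (∑ i, p.1 i) + 2 * p.2 = b} =
      ∑ k ∈ Finset.range ((n - 2) / 2 + 1),
        Nat.choose (n - 1) (2 * k + 1) * Cm ((b / 2 : ℕ) - (k : ℤ) + 1) (n - 1) := by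
  obtain ⟨b, rfl⟩ := hb
  rw [show (2 * b + 1) / 2 = b by omega, show n - 2 = n - 1 - 1 by omega]
  simpa using Nat.card_sum_add_two_mul_eq_odd (Fin (n - 1)) b

theorem stmt13 (n : ℕ) (hn : 2 ≤ n) (b : ℕ) (hb : Odd b) :
    Nat.card {p : (Fin (n - 1) → ℕ) × ℕ // (∑ i, p.1 i) + 2 * p.2 = b} =
      ∑ k ∈ Finset.range ((n - 2) / 2 + 1),
        Nat.choose (n - 1) (2 * k + 1) * Cm ((b / 2 : ℕ) - (k : ℤ) + 1) (n - 1) :=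
  stmt13_general n b hb
end

section
/- Let a_1,...,a_n be positive integers, M their least common multiple, and b a nonnegative integer. Then the set of nonnegative integer solutions (x_1,...,x_n) of ∑ a_i x_i = b is in bijection with the set of pairs ((t_1,...,t_n), (y_1,...,y_n)) where 0 ≤ t_i ≤ M/a_i − 1, the y_i are nonnegative integers, ∑ a_i t_i ≡ b (mod M), and ∑ y_i = (b − ∑ a_i t_i)/M. -/
theorem stmt15 (n : ℕ) (a : Fin n → ℕ) (ha : ∀ i, 0 < a i) (M : ℕ)
    (hM : M = Finset.univ.lcm a) (b : ℕ) :
    Nonempty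
      ({x : Fin n → ℕ // ∑ i, a i * x i = b} ≃
        {p : ((i : Fin n) → Fin (M / a i)) × (Fin n → ℕ) //
          (∑ i, (a i : ℤ) * ((p.1 i : ℕ) : ℤ)) % M = (b : ℤ) % M ∧
          (∑ i, ((p.2 i : ℕ) : ℤ)) =
            ((b : ℤ) - ∑ i, (a i : ℤ) * ((p.1 i : ℕ) : ℤ)) / M}) := by
  -- basic facts
  have hdvd : ∀ i, a i ∣ M := fun i => hM ▸ Finset.dvd_lcm (Finset.mem_univ i)
  have hMpos : 0 < M := by
    rcases Nat.eq_zero_or_pos M with h | h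
    · exfalso
      rw [hM] at h
      rw [Finset.lcm_eq_zero_iff] at h
      obtain ⟨i, -, hi⟩ := h
      exact (ha i).ne' hi
    · exact h
  have hm : ∀ i, a i * (M / a i) = M := fun i => Nat.mul_div_cancel' (hdvd i)
  have hmpos : ∀ i, 0 < M / a i := fun i =>
    Nat.div_pos (Nat.le_of_dvd hMpos (hdvd i)) (ha i)
  -- key sum identity
  have key : ∀ (t y : Fin n → ℕ),
      (∑ i, a i * (M / a i * y i + t i)) = M * (∑ i, y i) + ∑ i, a i * t i := by
    intro t y
    rw [Finset.mul_sum, ← Finset.sum_add_distrib]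
    refine Finset.sum_congr rfl fun i _ => ?_
    rw [Nat.mul_add, ← Nat.mul_assoc, hm i]
  refine ⟨{
    toFun := fun x =>
      ⟨⟨fun i => ⟨(x : Fin n → ℕ) i % (M / a i), Nat.mod_lt _ (hmpos i)⟩,
        fun i => (x : Fin n → ℕ) i / (M / a i)⟩, ?_⟩
    invFun := fun p =>
      ⟨fun i => M / a i * p.1.2 i + (p.1.1 i : ℕ), ?_⟩
    left_inv := ?_
    right_inv := ?_ }⟩
  · obtain ⟨x, hx⟩ := x
    have hb : b = M * (∑ i, x i / (M / a i)) + ∑ i, a i * (x i % (M / a i)) := by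
      rw [← hx, ← key]
      refine Finset.sum_congr rfl fun i _ => ?_
      rw [Nat.div_add_mod]
    have hbz : (b : ℤ) = (M : ℤ) * (∑ i, (x i / (M / a i) : ℕ) : ℤ)
        + ∑ i, (a i : ℤ) * ((x i % (M / a i) : ℕ) : ℤ) := by
      rw [hb]; push_cast; ring
    constructor
    · show (∑ i, (a i : ℤ) * ((x i % (M / a i) : ℕ) : ℤ)) % M = (b : ℤ) % M
      rw [hbz, add_comm, Int.add_mul_emod_self_left]
    · show (∑ i, ((x i / (M / a i) : ℕ) : ℤ))
        = ((b : ℤ) - ∑ i, (a i : ℤ) * ((x i % (M / a i) : ℕ) : ℤ)) / M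
      rw [hbz]
      rw [add_sub_cancel_right, Int.mul_ediv_cancel_left]
      exact_mod_cast hMpos.ne'
  · obtain ⟨⟨t, y⟩, hmod, hq⟩ := p
    simp only at hmod hq ⊢
    have hdvd2 : (M : ℤ) ∣ (b : ℤ) - ∑ i, (a i : ℤ) * ((t i : ℕ) : ℤ) := by
      rw [Int.dvd_iff_emod_eq_zero, Int.sub_emod, hmod, sub_self, Int.zero_emod]
    have hMy : (M : ℤ) * ∑ i, ((y i : ℕ) : ℤ)
        = (b : ℤ) - ∑ i, (a i : ℤ) * ((t i : ℕ) : ℤ) := by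
      rw [hq, Int.mul_ediv_cancel' hdvd2]
    have : ((∑ i, a i * (M / a i * y i + (t i : ℕ)) : ℕ) : ℤ) = (b : ℤ) := by
      rw [key]
      push_cast
      rw [hMy]; ring
    exact_mod_cast this
  · rintro ⟨x, hx⟩
    ext i
    simp [Nat.div_add_mod]
  · rintro ⟨⟨t, y⟩, hp⟩
    have ht : ∀ i, (M / a i * y i + (t i : ℕ)) % (M / a i) = (t i : ℕ) := fun i => by
      rw [Nat.mul_add_mod, Nat.mod_eq_of_lt (t i).isLt]
    have hy : ∀ i, (M / a i * y i + (t i : ℕ)) / (M / a i) = y i := fun i => by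
      rw [Nat.mul_add_div (hmpos i), Nat.div_eq_of_lt (t i).isLt, Nat.add_zero]
    apply Subtype.ext
    simp only [Prod.mk.injEq]
    constructor
    · funext i; exact Fin.ext (ht i)
    · funext i; exact hy i
end
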